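/- arXiv:2206.08900 — 3 statements merged into one kernel-verified Lean document; each statement's English description precedes it below -/
import Mathlib

section
/- Let f : Θ × X → ℝ be differentiable and normalised with Θ = Θ' ⊕ Θ''. Let h be the first-order Taylor expansion of f(·, x) about θ̃ = θ̃' + θ̃'', and h_k the first-order Taylor expansion about θ̃_k = θ̃' + kθ̃'' for k > 0. Then for all θ' ∈ Θ', θ'' ∈ Θ'' and x ∈ X: h_k(θ' + kθ'', x) = h(θ' + θ'', x). -/
/-- For a normalised differentiable network, the first-order Taylor expansion `h_k` about the
rescaled point `θ̃' + kθ̃''`, evaluated at `θ' + kθ''`, equals the Taylor expansion `h` about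
`θ̃' + θ̃''` evaluated at `θ' + θ''`. -/
theorem stmt_5 {E F X : Type*}
    [NormedAddCommGroup E] [NormedSpace ℝ E]
    [NormedAddCommGroup F] [NormedSpace ℝ F]
    (f : E × F → X → ℝ)
    (hdiff : ∀ x, Differentiable ℝ (fun θ => f θ x))
    (hnorm : ∀ c : ℝ, 0 < c → ∀ (θ' : E) (θ'' : F) (x : X),
      f (θ', c • θ'') x = f (θ', θ'') x)
    (θt : E × F) (k : ℝ) (hk : 0 < k)
    (h hk' : E × F → X → ℝ)
    (hh : ∀ θ x, h θ x = f θt x + fderiv ℝ (fun θ' => f θ' x) θt (θ - θt))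
    (hhk : ∀ θ x, hk' θ x = f (θt.1, k • θt.2) x
      + fderiv ℝ (fun θ' => f θ' x) (θt.1, k • θt.2) (θ - (θt.1, k • θt.2)))
    (θ' : E) (θ'' : F) (x : X) :
    hk' (θ', k • θ'') x = h (θ', θ'') x := by
  set L : E × F →L[ℝ] E × F :=
    (ContinuousLinearMap.fst ℝ E F).prod (k • ContinuousLinearMap.snd ℝ E F) with hL
  have hLapp : ∀ p : E × F, L p = (p.1, k • p.2) := fun p => rfl
  have hfL : (fun θ => f θ x) = (fun θ => f θ x) ∘ L := by
    funext p
    simp only [Function.comp, hLapp]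
    exact (hnorm k hk p.1 p.2 x).symm
  have hderiv : fderiv ℝ (fun θ => f θ x) θt
      = ((fderiv ℝ (fun θ => f θ x) (L θt)).comp L) := by
    conv_lhs => rw [hfL]
    rw [fderiv_comp θt (hdiff x (L θt)) L.differentiableAt,
      L.fderiv]
  have hLθt : L θt = (θt.1, k • θt.2) := rfl
  have hLdiff : L ((θ', θ'') - θt) = ((θ', k • θ'') - (θt.1, k • θt.2)) := by
    simp [hLapp, Prod.sub_def, smul_sub]
  rw [hhk, hh, hnorm k hk θt.1 θt.2 x, hderiv]
  simp only [ContinuousLinearMap.comp_apply, hLθt, hLdiff]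
end

section
/- Let H ∈ ℝ^{n×n} be symmetric positive semidefinite and θ_⋆ ∈ ℝⁿ fixed. The function M(Λ) = −(1/2)·[θ_⋆ᵀΛθ_⋆ + log det(Λ⁻¹H + I)], defined on positive-definite diagonal matrices Λ = diag(λ₁, ..., λₙ) with λᵢ > 0, is concave in (λ₁, ..., λₙ). -/
/-!
Expanding the determinant multilinearly along the rows of `Λ⁻¹H + I` gives
`det(Λ⁻¹H + I) = ∑ₛ det H[s,s] · ∏_{i ∈ s} λᵢ⁻¹`, a sum over index sets `s` whose coefficients are
the principal minors of `H`: nonnegative since `H` is positive semidefinite, and `1` for `s = ∅`.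
Each monomial `∏_{i ∈ s} λᵢ⁻¹` is log-convex in `λ` by weighted AM-GM, and by Hölder's inequality
a nonnegative combination of log-convex functions is log-convex. So `log det(Λ⁻¹H + I)` is convex,
while `θ⋆ᵀΛθ⋆` is linear in `λ`.
-/

open Matrix Finset

theorem Real.sum_rpow_mul_rpow_le {ι : Type*} (s : Finset ι) {f g : ι → ℝ}
    (hf : ∀ i ∈ s, 0 ≤ f i) (hg : ∀ i ∈ s, 0 ≤ g i) {a b : ℝ} (ha : 0 < a) (hb : 0 < b)
    (hab : a + b = 1) :
    ∑ i ∈ s, f i ^ a * g i ^ b ≤ (∑ i ∈ s, f i) ^ a * (∑ i ∈ s, g i) ^ b := by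
  have hHolder := Real.inner_le_Lp_mul_Lq_of_nonneg s (.inv_inv ha hb hab)
    (fun i hi => Real.rpow_nonneg (hf i hi) a) (fun i hi => Real.rpow_nonneg (hg i hi) b)
  rwa [sum_congr rfl fun i hi => Real.rpow_rpow_inv (hf i hi) ha.ne',
    sum_congr rfl fun i hi => Real.rpow_rpow_inv (hg i hi) hb.ne', one_div, inv_inv,
    one_div, inv_inv] at hHolder

section Posynomial

variable {ι κ : Type*}

theorem convex_setOf_forall_pos : Convex ℝ {x : ι → ℝ | ∀ i, 0 < x i} := by
  have h : {x : ι → ℝ | ∀ i, 0 < x i} = Set.univ.pi fun _ => Set.Ioi 0 := by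
    ext x; simp
  exact h ▸ convex_pi fun _ _ => convex_Ioi 0

theorem prod_inv_smul_add_smul_le {x y : ι → ℝ} (hx : ∀ i, 0 < x i) (hy : ∀ i, 0 < y i)
    {a b : ℝ} (ha : 0 ≤ a) (hb : 0 ≤ b) (hab : a + b = 1) (t : Finset ι) :
    ∏ i ∈ t, ((a • x + b • y) i)⁻¹ ≤ (∏ i ∈ t, (x i)⁻¹) ^ a * (∏ i ∈ t, (y i)⁻¹) ^ b := by
  have hxy : ∀ i, 0 < (a • x + b • y) i := fun i =>
    convex_setOf_forall_pos hx hy ha hb hab i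
  have hcoord : ∀ i, ((a • x + b • y) i)⁻¹ ≤ (x i)⁻¹ ^ a * (y i)⁻¹ ^ b := fun i => by
    rw [Real.inv_rpow (hx i).le, Real.inv_rpow (hy i).le, ← mul_inv]
    refine inv_anti₀ (mul_pos (Real.rpow_pos_of_pos (hx i) a) (Real.rpow_pos_of_pos (hy i) b)) ?_
    simpa using Real.geom_mean_le_arith_mean2_weighted ha hb (hx i).le (hy i).le hab
  calc ∏ i ∈ t, ((a • x + b • y) i)⁻¹ ≤ ∏ i ∈ t, (x i)⁻¹ ^ a * (y i)⁻¹ ^ b :=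
        prod_le_prod (fun i _ => (inv_pos.2 (hxy i)).le) fun i _ => hcoord i
    _ = _ := by
      rw [prod_mul_distrib, Real.finsetProd_rpow _ _ fun i _ => (inv_pos.2 (hx i)).le,
        Real.finsetProd_rpow _ _ fun i _ => (inv_pos.2 (hy i)).le]

variable (t : Finset κ) (c : κ → ℝ) (T : κ → Finset ι)

theorem sum_mul_prod_inv_smul_add_smul_le (hc : ∀ k ∈ t, 0 ≤ c k) {x y : ι → ℝ}
    (hx : ∀ i, 0 < x i) (hy : ∀ i, 0 < y i) {a b : ℝ} (ha : 0 < a) (hb : 0 < b)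
    (hab : a + b = 1) :
    ∑ k ∈ t, c k * ∏ i ∈ T k, ((a • x + b • y) i)⁻¹ ≤
      (∑ k ∈ t, c k * ∏ i ∈ T k, (x i)⁻¹) ^ a * (∑ k ∈ t, c k * ∏ i ∈ T k, (y i)⁻¹) ^ b := by
  have hprod_nonneg : ∀ (z : ι → ℝ), (∀ i, 0 < z i) → ∀ k, 0 ≤ ∏ i ∈ T k, (z i)⁻¹ :=
    fun z hz k => prod_nonneg fun i _ => (inv_pos.2 (hz i)).le
  refine le_trans ?_ (Real.sum_rpow_mul_rpow_le t
    (fun k hk => mul_nonneg (hc k hk) (hprod_nonneg x hx k))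
    (fun k hk => mul_nonneg (hc k hk) (hprod_nonneg y hy k)) ha hb hab)
  refine sum_le_sum fun k hk => ?_
  rw [Real.mul_rpow (hc k hk) (hprod_nonneg x hx k),
    Real.mul_rpow (hc k hk) (hprod_nonneg y hy k), mul_mul_mul_comm,
    ← Real.rpow_add' (hc k hk) (hab ▸ one_ne_zero), hab, Real.rpow_one]
  exact mul_le_mul_of_nonneg_left (prod_inv_smul_add_smul_le hx hy ha.le hb.le hab _) (hc k hk)

theorem sum_mul_prod_inv_pos (hc : ∀ k ∈ t, 0 ≤ c k) (hpos : ∃ k ∈ t, 0 < c k) {x : ι → ℝ}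
    (hx : ∀ i, 0 < x i) : 0 < ∑ k ∈ t, c k * ∏ i ∈ T k, (x i)⁻¹ := by
  obtain ⟨k, hk, hck⟩ := hpos
  exact sum_pos'
    (fun k hk => mul_nonneg (hc k hk) (prod_nonneg fun i _ => (inv_pos.2 (hx i)).le))
    ⟨k, hk, mul_pos hck (prod_pos fun i _ => inv_pos.2 (hx i))⟩

theorem convexOn_log_sum_mul_prod_inv (hc : ∀ k ∈ t, 0 ≤ c k) (hpos : ∃ k ∈ t, 0 < c k) :
    ConvexOn ℝ {x : ι → ℝ | ∀ i, 0 < x i}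
      fun x => Real.log (∑ k ∈ t, c k * ∏ i ∈ T k, (x i)⁻¹) := by
  refine convexOn_iff_forall_pos.2 ⟨convex_setOf_forall_pos, fun x hx y hy a b ha hb hab => ?_⟩
  have hQx := sum_mul_prod_inv_pos t c T hc hpos hx
  have hQy := sum_mul_prod_inv_pos t c T hc hpos hy
  have hQxy := sum_mul_prod_inv_pos t c T hc hpos
    (convex_setOf_forall_pos hx hy ha.le hb.le hab)
  calc Real.log (∑ k ∈ t, c k * ∏ i ∈ T k, ((a • x + b • y) i)⁻¹)
      ≤ Real.log ((∑ k ∈ t, c k * ∏ i ∈ T k, (x i)⁻¹) ^ a *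
          (∑ k ∈ t, c k * ∏ i ∈ T k, (y i)⁻¹) ^ b) :=
        Real.log_le_log hQxy (sum_mul_prod_inv_smul_add_smul_le t c T hc hx hy ha hb hab)
    _ = _ := by
      rw [Real.log_mul (Real.rpow_pos_of_pos hQx a).ne' (Real.rpow_pos_of_pos hQy b).ne',
        Real.log_rpow hQx, Real.log_rpow hQy, smul_eq_mul, smul_eq_mul]

end Posynomial

theorem Matrix.det_diagonal_mul_add_one {R n : Type*} [CommRing R] [Fintype n] [DecidableEq n]
    (d : n → R) (M : Matrix n n R) :
    (diagonal d * M + 1).det =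
      ∑ s : Finset n, (M.submatrix (↑) (↑) : Matrix s s R).det * ∏ i ∈ s, d i := by
  let D := (detRowAlternating : (n → R) [⋀^n]→ₗ[R] R)
  have hrows :
      (diagonal d * M + 1).det = D ((fun i => d i • M i) + fun i => (1 : Matrix n n R) i) := by
    congr 1; ext i j; simp [diagonal_mul]
  rw [hrows, D.map_add_univ]
  refine sum_congr rfl fun s _ => ?_
  have hpw : s.piecewise (fun i => d i • M i) (fun i => (1 : Matrix n n R) i)
      = s.piecewise (fun i => d i • s.piecewise M.row (row 1) i) (s.piecewise M.row (row 1)) := by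
    funext i
    by_cases hi : i ∈ s <;> simp [hi] <;> rfl
  rw [hpw, ← det_piecewise_one_eq_submatrix_det, mul_comm, ← smul_eq_mul]
  exact D.toMultilinearMap.map_piecewise_smul d _ s

theorem Matrix.inv_diagonal_of_ne_zero {n K : Type*} [Fintype n] [DecidableEq n] [Field K]
    {d : n → K} (hd : ∀ i, d i ≠ 0) : (diagonal d)⁻¹ = diagonal d⁻¹ :=
  inv_eq_left_inv <| by
    rw [diagonal_mul_diagonal, ← diagonal_one]
    exact congrArg diagonal (funext fun i => inv_mul_cancel₀ (hd i))

theorem Matrix.dotProduct_diagonal_mulVec {n R : Type*} [Fintype n] [DecidableEq n]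
    [CommSemiring R] (d v : n → R) : v ⬝ᵥ (diagonal d *ᵥ v) = (v * v) ⬝ᵥ d := by
  simp only [dotProduct, mulVec_diagonal, Pi.mul_apply]
  exact sum_congr rfl fun i _ => by ring

/-- Concavity of the linearised Laplace log model evidence
`M(Λ) = -(1/2)[θ⋆ᵀΛθ⋆ + log det(Λ⁻¹H + I)]` in the diagonal prior precision entries. -/
theorem stmt_12 {n : ℕ}
    (H : Matrix (Fin n) (Fin n) ℝ) (hH : H.PosSemidef)
    (θs : Fin n → ℝ) :
    ConcaveOn ℝ {lam : Fin n → ℝ | ∀ i, 0 < lam i}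
      (fun lam => -(1 / 2) * ((θs ⬝ᵥ (Matrix.diagonal lam *ᵥ θs))
        + Real.log ((Matrix.diagonal lam)⁻¹ * H + 1).det)) := by
  have hquad : ConvexOn ℝ {lam : Fin n → ℝ | ∀ i, 0 < lam i}
      fun lam => θs ⬝ᵥ (diagonal lam *ᵥ θs) :=
    ((dotProductEquiv ℝ (Fin n) (θs * θs)).convexOn convex_setOf_forall_pos).congr
      fun lam _ => by simp [dotProduct_diagonal_mulVec]
  have hlogdet : ConvexOn ℝ {lam : Fin n → ℝ | ∀ i, 0 < lam i}
      fun lam => Real.log ((diagonal lam)⁻¹ * H + 1).det := by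
    refine (convexOn_log_sum_mul_prod_inv univ
      (fun s : Finset (Fin n) => (H.submatrix (↑) (↑) : Matrix s s ℝ).det) id
      (fun s _ => (hH.submatrix _).det_nonneg) ⟨∅, mem_univ _, by simp⟩).congr fun lam hlam => ?_
    rw [inv_diagonal_of_ne_zero fun i => (hlam i).ne', det_diagonal_mul_add_one]
    rfl
  refine ((hquad.add hlogdet).smul (by norm_num : (0 : ℝ) ≤ 1 / 2)).neg.congr fun lam _ => ?_
  simp only [Pi.neg_apply, Pi.add_apply, smul_eq_mul]
  ring
end

section
/- Let L_h : ℝⁿ → ℝ be convex and differentiable, and for positive diagonal Λ define L(θ, Λ) = L_h(θ) + θᵀΛθ and M(θ, Λ) = −(1/2)[θᵀΛθ + log det(Λ⁻¹H + I)] with H symmetric positive semidefinite. Suppose (θ_⋆, Λ_⋆) satisfies θ_⋆ ∈ argmin_θ L(θ, Λ_⋆) and Λ_⋆ ∈ argmax_Λ M(θ_⋆, Λ). Then the first-order conditions ∇L_h(θ_⋆) + 2Λ_⋆θ_⋆ = 0 and, for each i, (θ_⋆)ᵢ² = [(H + Λ_⋆)⁻¹H Λ_⋆⁻¹]_{ii}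 hold simultaneously. -/
open Matrix

/-!
Both conditions are first-order conditions at an interior extremum, tested along lines. In `θ`,
the line derivative of `θ ↦ θᵀΛθ` in direction `v` is `2 θᵀΛv`, since `Λ` is symmetric. In `Λ`,
vary only `λᵢ`: for positive `λ`, `log det (Λ⁻¹H + 1) = log det (H + Λ) - ∑ⱼ log λⱼ`, and
`det (H + Λ)` is affine in `λᵢ` with slope `adj (H + Λ)ᵢᵢ`, so the derivative of the evidence in
`λᵢ` is `-½ (θᵢ² + (H + Λ)⁻¹ᵢᵢ - λᵢ⁻¹)`. It remains to note
`(H + Λ)⁻¹ H Λ⁻¹ = Λ⁻¹ - (H + Λ)⁻¹`.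
-/

theorem Function.update_pos {ι α : Type*} [DecidableEq ι] [Zero α] [LT α] {x : ι → α}
    (hx : ∀ j, 0 < x j) (i : ι) {t : α} (ht : 0 < t) (j : ι) : 0 < Function.update x i t j :=
  (Function.forall_update_iff x fun _ y => 0 < y).2 ⟨ht, fun j _ => hx j⟩ j

section

variable {𝕜 ι : Type*} [NontriviallyNormedField 𝕜] [Fintype ι] [DecidableEq ι]

theorem hasDerivAt_sum_update {F : Type*} [NormedAddCommGroup F] [NormedSpace 𝕜 F]
    (f : ι → 𝕜 → F) (x : ι → 𝕜) (i : ι) {f' : F} (hf : HasDerivAt (f i) f' (x i)) :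
    HasDerivAt (fun t => ∑ j, f j (Function.update x i t j)) f' (x i) := by
  have hsum : ∀ t, ∑ j, f j (Function.update x i t j)
      = f i t + ∑ j ∈ Finset.univ \ {i}, f j (x j) := by
    intro t
    simp_rw [Function.apply_update f x i t]
    rw [Finset.sum_update_of_mem (Finset.mem_univ i)]
  simp_rw [hsum]
  exact hf.add_const _

namespace Matrix

theorem hasLineDerivAt_dotProduct_mulVec {A : Matrix ι ι 𝕜} (hA : A.IsSymm) (x v : ι → 𝕜) :
    HasLineDerivAt 𝕜 (fun y => y ⬝ᵥ (A *ᵥ y)) (2 * (x ⬝ᵥ (A *ᵥ v))) x v := by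
  have h := A.toQuadraticForm'.hasLineDerivAt x v
  have hsymm : v ⬝ᵥ (A *ᵥ x) = x ⬝ᵥ (A *ᵥ v) := by
    rw [dotProduct_mulVec, ← mulVec_transpose, hA.eq, dotProduct_comm]
  simp only [toQuadraticForm', LinearMap.BilinMap.polar_toQuadraticMap,
    toLinearMap₂'_apply', hsymm] at h
  rw [two_mul]
  convert h using 1
  ext y
  simp [toLinearMap₂'_apply']

theorem det_add_diagonal_update {R : Type*} [CommRing R] (B : Matrix ι ι R) (d : ι → R) (i : ι)
    (t : R) :
    (B + diagonal (Function.update d i t)).det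
      = (B + diagonal d).det + (t - d i) * adjugate (B + diagonal d) i i := by
  have hrow : B + diagonal (Function.update d i t)
      = (B + diagonal d).updateRow i ((B + diagonal d) i + (t - d i) • Pi.single i 1) := by
    ext j k
    rcases eq_or_ne j i with rfl | hj
    · simp only [updateRow_self, add_apply, diagonal_apply, Function.update_apply, Pi.add_apply,
        Pi.smul_apply, Pi.single_apply, smul_eq_mul]
      split_ifs <;> simp_all
    · simp [diagonal_apply, hj]
  rw [hrow, det_updateRow_add, det_updateRow_smul, updateRow_eq_self, adjugate_apply]

theorem hasDerivAt_det_add_diagonal_update (B : Matrix ι ι 𝕜) (d : ι → 𝕜) (i : ι) :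
    HasDerivAt (fun t => (B + diagonal (Function.update d i t)).det)
      (adjugate (B + diagonal d) i i) (d i) := by
  simp_rw [det_add_diagonal_update]
  simpa using (((hasDerivAt_id (d i)).sub_const (d i)).mul_const
    (adjugate (B + diagonal d) i i)).const_add (B + diagonal d).det

theorem inv_add_mul_mul_inv {R : Type*} [CommRing R] {H D : Matrix ι ι R} (hD : IsUnit D.det)
    (hHD : IsUnit (H + D).det) : (H + D)⁻¹ * H * D⁻¹ = D⁻¹ - (H + D)⁻¹ := by
  calc (H + D)⁻¹ * H * D⁻¹ = (H + D)⁻¹ * ((H + D) - D) * D⁻¹ := by rw [add_sub_cancel_right]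
    _ = D⁻¹ - (H + D)⁻¹ := by
      rw [mul_sub, sub_mul, nonsing_inv_mul _ hHD, one_mul, mul_assoc, mul_nonsing_inv _ hD,
        mul_one]

theorem hasDerivAt_log_det_add_diagonal_update (B : Matrix ι ι ℝ) (d : ι → ℝ) (i : ι)
    (hdet : (B + diagonal d).det ≠ 0) :
    HasDerivAt (fun t => Real.log (B + diagonal (Function.update d i t)).det)
      ((B + diagonal d)⁻¹ i i) (d i) := by
  have hlog := (hasDerivAt_det_add_diagonal_update B d i).log (by simpa using hdet)
  rw [Function.update_eq_self] at hlog
  rwa [inv_def, smul_apply, smul_eq_mul, Ring.inverse_eq_inv, inv_mul_eq_div]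

theorem log_det_inv_mul_add_one {D H : Matrix ι ι ℝ} (hD : D.det ≠ 0) (hHD : (H + D).det ≠ 0) :
    Real.log (D⁻¹ * H + 1).det = Real.log (H + D).det - Real.log D.det := by
  have hfac : D⁻¹ * H + 1 = D⁻¹ * (H + D) := by
    rw [mul_add, nonsing_inv_mul _ hD.isUnit]
  rw [hfac, det_mul, det_nonsing_inv, Ring.inverse_eq_inv, Real.log_mul (inv_ne_zero hD) hHD,
    Real.log_inv]
  ring

theorem hasDerivAt_dotProduct_diagonal_update_add_log_det {H : Matrix ι ι ℝ} (hH : H.PosSemidef)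
    (θ lam : ι → ℝ) (hlam : ∀ j, 0 < lam j) (i : ι) :
    HasDerivAt (fun t => θ ⬝ᵥ (diagonal (Function.update lam i t) *ᵥ θ)
        + Real.log ((diagonal (Function.update lam i t))⁻¹ * H + 1).det)
      (θ i ^ 2 + ((H + diagonal lam)⁻¹ i i - (lam i)⁻¹)) (lam i) := by
  have hdet_pos : ∀ d : ι → ℝ, (∀ j, 0 < d j) → 0 < (H + diagonal d).det := fun d hd =>
    (PosDef.posSemidef_add hH (posDef_diagonal_iff.mpr hd)).det_pos
  have hsplit : (fun t => ∑ j, θ j * (Function.update lam i t j * θ j)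
        + (Real.log (H + diagonal (Function.update lam i t)).det
          - ∑ j, Real.log (Function.update lam i t j)))
      =ᶠ[nhds (lam i)] (fun t => θ ⬝ᵥ (diagonal (Function.update lam i t) *ᵥ θ)
        + Real.log ((diagonal (Function.update lam i t))⁻¹ * H + 1).det) := by
    filter_upwards [Ioi_mem_nhds (hlam i)] with t ht
    have hpos := Function.update_pos hlam i ht
    rw [log_det_inv_mul_add_one (posDef_diagonal_iff.mpr hpos).det_pos.ne' (hdet_pos _ hpos).ne',
      det_diagonal, Real.log_prod fun j _ => (hpos j).ne']
    simp [dotProduct, mulVec_diagonal]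
  refine HasDerivAt.congr_of_eventuallyEq ?_ hsplit.symm
  refine (hasDerivAt_sum_update (fun j s => θ j * (s * θ j)) lam i ?_).fun_add
    ((hasDerivAt_log_det_add_diagonal_update H lam i (hdet_pos lam hlam).ne').fun_sub
      (hasDerivAt_sum_update (fun _ => Real.log) lam i (Real.hasDerivAt_log (hlam i).ne')))
  simpa [sq] using ((hasDerivAt_id (lam i)).mul_const (θ i)).const_mul (θ i)

end Matrix

end

theorem stmt_17_general {n : ℕ}
    (Lh : (Fin n → ℝ) → ℝ)
    (hLdiff : Differentiable ℝ Lh)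
    (H : Matrix (Fin n) (Fin n) ℝ) (hH : H.PosSemidef)
    (θs : Fin n → ℝ) (lams : Fin n → ℝ) (hlams : ∀ i, 0 < lams i)
    (M : (Fin n → ℝ) → ℝ)
    (hM : ∀ lam, M lam = -(1 / 2) * ((θs ⬝ᵥ (Matrix.diagonal lam *ᵥ θs))
      + Real.log ((Matrix.diagonal lam)⁻¹ * H + 1).det))
    (hmin : IsMinOn (fun θ => Lh θ + θ ⬝ᵥ (Matrix.diagonal lams *ᵥ θ)) Set.univ θs)
    (hmax : ∀ lam : Fin n → ℝ, (∀ i, 0 < lam i) → M lam ≤ M lams) :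
    (∀ v, fderiv ℝ Lh θs v + 2 * (θs ⬝ᵥ (Matrix.diagonal lams *ᵥ v)) = 0)
      ∧ ∀ i, (θs i) ^ 2
          = ((H + Matrix.diagonal lams)⁻¹ * H * (Matrix.diagonal lams)⁻¹) i i := by
  refine ⟨fun v => ?_, fun i => ?_⟩
  · have hderiv : HasLineDerivAt ℝ (fun θ => Lh θ + θ ⬝ᵥ (diagonal lams *ᵥ θ))
        (fderiv ℝ Lh θs v + 2 * (θs ⬝ᵥ (diagonal lams *ᵥ v))) θs v :=
      ((hLdiff θs).hasFDerivAt.hasLineDerivAt v).add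
        (hasLineDerivAt_dotProduct_mulVec (isSymm_diagonal lams) θs v)
    exact hmin.hasLineDerivAt_eq_zero hderiv (by simp)
  · have hmax_line : IsLocalMax (fun t => M (Function.update lams i t)) (lams i) := by
      filter_upwards [Ioi_mem_nhds (hlams i)] with t ht
      simpa using hmax _ (Function.update_pos hlams i ht)
    have hderiv := (hasDerivAt_dotProduct_diagonal_update_add_log_det hH θs lams hlams i).const_mul
      (-(1 / 2) : ℝ)
    simp only [← hM] at hderiv
    have hstationary := hmax_line.hasDerivAt_eq_zero hderiv
    have hΛ : IsUnit (diagonal lams).det := (posDef_diagonal_iff.mpr hlams).det_pos.ne'.isUnit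
    have hHΛ : IsUnit (H + diagonal lams).det :=
      (PosDef.posSemidef_add hH (posDef_diagonal_iff.mpr hlams)).det_pos.ne'.isUnit
    have hΛinv : (diagonal lams)⁻¹ = diagonal lams⁻¹ := inv_eq_left_inv <| by
      rw [diagonal_mul_diagonal, ← diagonal_one]
      congr 1 with j
      exact inv_mul_cancel₀ (hlams j).ne'
    rw [inv_add_mul_mul_inv hΛ hHΛ, Matrix.sub_apply, hΛinv, diagonal_apply_eq, Pi.inv_apply]
    linarith

/-- First-order characterisation of the joint stationary point `(θ⋆, Λ⋆)` of the alternating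
optimisation of the regularised linear-model loss in `θ` and the model evidence in the
diagonal prior precision `Λ`. -/
theorem stmt_17 {n : ℕ}
    (Lh : (Fin n → ℝ) → ℝ)
    (hLconv : ConvexOn ℝ Set.univ Lh)
    (hLdiff : Differentiable ℝ Lh)
    (H : Matrix (Fin n) (Fin n) ℝ) (hH : H.PosSemidef)
    (θs : Fin n → ℝ) (lams : Fin n → ℝ) (hlams : ∀ i, 0 < lams i)
    (M : (Fin n → ℝ) → ℝ)
    (hM : ∀ lam, M lam = -(1 / 2) * ((θs ⬝ᵥ (Matrix.diagonal lam *ᵥ θs))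
      + Real.log ((Matrix.diagonal lam)⁻¹ * H + 1).det))
    (hmin : IsMinOn (fun θ => Lh θ + θ ⬝ᵥ (Matrix.diagonal lams *ᵥ θ)) Set.univ θs)
    (hmax : ∀ lam : Fin n → ℝ, (∀ i, 0 < lam i) → M lam ≤ M lams) :
    (∀ v, fderiv ℝ Lh θs v + 2 * (θs ⬝ᵥ (Matrix.diagonal lams *ᵥ v)) = 0)
      ∧ ∀ i, (θs i) ^ 2
          = ((H + Matrix.diagonal lams)⁻¹ * H * (Matrix.diagonal lams)⁻¹) i i :=
  stmt_17_general Lh hLdiff H hH θs lams hlams M hM hmin hmax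
end
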